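/- Gradient approximation bound for rubric rewards: let X be a finite probability space with distribution π_θ (all outcomes having positive probability), let s(o) = ∇_θ log π_θ(o) ∈ ℝⁿ be the score function (satisfying E[s] = 0), let f_I : X → {0,1}ᵈ and w_I ∈ ℝᵈ, and suppose the true reward U and estimated reward R satisfy U(o) − R(o) = w_Iᵀ f_I(o) for all o. Then ‖E[s · U] − E[s · R]‖₂ ≤ sqrt(E[‖s‖₂²]) · ‖w_I‖₁. -/

import Mathlib

/-! The gap `E[s U] - E[s R] = E[s (U - R)]` is controlled pointwise: since every grade `f_I k`
lies in `{0, 1}`, `|U - R| = |w_Iᵀ f_I| ≤ ‖w_I‖₁`. Hence its norm is at most `‖w_I‖₁ E[‖s‖]`,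
and `E[‖s‖] ≤ sqrt(E[‖s‖²])` by Jensen's inequality for the square. -/

open Finset

theorem abs_sum_mul_le_sum_abs_of_abs_le_one {ι : Type*} (t : Finset ι) (w f : ι → ℝ)
    (hf : ∀ k ∈ t, |f k| ≤ 1) : |∑ k ∈ t, w k * f k| ≤ ∑ k ∈ t, |w k| :=
  calc |∑ k ∈ t, w k * f k| ≤ ∑ k ∈ t, |w k * f k| := abs_sum_le_sum_abs _ _
    _ ≤ ∑ k ∈ t, |w k| := sum_le_sum fun k hk => by
      rw [abs_mul]
      exact mul_le_of_le_one_right (abs_nonneg _) (hf k hk)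

section WeightedSums

variable {X : Type*} (t : Finset X) (p : X → ℝ)

theorem sum_smul_sub_sum_smul {E : Type*} [AddCommGroup E] [Module ℝ E] (U R : X → ℝ)
    (s : X → E) :
    ∑ x ∈ t, p x • (U x • s x) - ∑ x ∈ t, p x • (R x • s x) =
      ∑ x ∈ t, (p x * (U x - R x)) • s x := by
  simp only [← sum_sub_distrib, smul_smul, ← sub_smul, mul_sub]

theorem norm_sum_mul_smul_le {E : Type*} [SeminormedAddCommGroup E] [NormedSpace ℝ E]
    (Y : X → ℝ) (s : X → E) (hp : ∀ x ∈ t, 0 ≤ p x) {B : ℝ} (hY : ∀ x ∈ t, |Y x| ≤ B) :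
    ‖∑ x ∈ t, (p x * Y x) • s x‖ ≤ B * ∑ x ∈ t, p x * ‖s x‖ :=
  calc ‖∑ x ∈ t, (p x * Y x) • s x‖ ≤ ∑ x ∈ t, ‖(p x * Y x) • s x‖ := norm_sum_le _ _
    _ ≤ ∑ x ∈ t, B * (p x * ‖s x‖) := sum_le_sum fun x hx => by
      rw [norm_smul, Real.norm_eq_abs, abs_mul, abs_of_nonneg (hp x hx), mul_comm (p x), mul_assoc]
      exact mul_le_mul_of_nonneg_right (hY x hx) (mul_nonneg (hp x hx) (norm_nonneg _))
    _ = B * ∑ x ∈ t, p x * ‖s x‖ := (mul_sum _ _ _).symm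

theorem sum_mul_le_sqrt_sum_mul_sq (a : X → ℝ) (hp : ∀ x ∈ t, 0 ≤ p x)
    (hp1 : ∑ x ∈ t, p x = 1) : ∑ x ∈ t, p x * a x ≤ √(∑ x ∈ t, p x * a x ^ 2) :=
  (le_abs_self _).trans <| Real.abs_le_sqrt <|
    Real.pow_arith_mean_le_arith_mean_pow_of_even t p a hp hp1 even_two

end WeightedSums

theorem gradient_approx_bound_general {n d : ℕ} {X : Type*} [Fintype X]
    (p : X → ℝ) (hp : ∀ x, 0 < p x) (hp1 : ∑ x, p x = 1)
    (s : X → EuclideanSpace ℝ (Fin n))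
    (fI : X → Fin d → ℝ) (hfI : ∀ x k, fI x k = 0 ∨ fI x k = 1)
    (wI : Fin d → ℝ) (U R : X → ℝ)
    (hUR : ∀ x, U x - R x = ∑ k, wI k * fI x k) :
    ‖(∑ x, p x • (U x • s x)) - ∑ x, p x • (R x • s x)‖ ≤
      Real.sqrt (∑ x, p x * ‖s x‖ ^ 2) * ∑ k, |wI k| := by
  have hp0 : ∀ x ∈ univ, 0 ≤ p x := fun x _ => (hp x).le
  have hgap : ∀ x ∈ univ, |U x - R x| ≤ ∑ k, |wI k| := fun x _ => by
    rw [hUR x]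
    refine abs_sum_mul_le_sum_abs_of_abs_le_one _ _ _ fun k _ => ?_
    rcases hfI x k with h | h <;> simp [h]
  calc ‖(∑ x, p x • (U x • s x)) - ∑ x, p x • (R x • s x)‖
      = ‖∑ x, (p x * (U x - R x)) • s x‖ := by rw [sum_smul_sub_sum_smul]
    _ ≤ (∑ k, |wI k|) * ∑ x, p x * ‖s x‖ := norm_sum_mul_smul_le _ _ _ _ hp0 hgap
    _ ≤ (∑ k, |wI k|) * √(∑ x, p x * ‖s x‖ ^ 2) := by
      gcongr
      exact sum_mul_le_sqrt_sum_mul_sq _ _ _ hp0 hp1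
    _ = √(∑ x, p x * ‖s x‖ ^ 2) * ∑ k, |wI k| := mul_comm _ _

/-- Proposition 1: gradient approximation bound for rubric rewards.
If `U - R = w_Iᵀ f_I` with binary `f_I`, then the gap between the true and
estimated policy gradients is at most `sqrt(E[‖s‖²]) * ‖w_I‖₁`. -/
theorem gradient_approx_bound {n d : ℕ} {X : Type*} [Fintype X]
    (p : X → ℝ) (hp : ∀ x, 0 < p x) (hp1 : ∑ x, p x = 1)
    (s : X → EuclideanSpace ℝ (Fin n)) (hEs : ∑ x, p x • s x = 0)
    (fI : X → Fin d → ℝ) (hfI : ∀ x k, fI x k = 0 ∨ fI x k = 1)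
    (wI : Fin d → ℝ) (U R : X → ℝ)
    (hUR : ∀ x, U x - R x = ∑ k, wI k * fI x k) :
    ‖(∑ x, p x • (U x • s x)) - ∑ x, p x • (R x • s x)‖ ≤
      Real.sqrt (∑ x, p x * ‖s x‖ ^ 2) * ∑ k, |wI k| :=
  gradient_approx_bound_general p hp hp1 s fI hfI wI U R hUR
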